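/- Uncertainty principle for the landscape function, symmetric case (classical version): let Ω ⊆ ℝⁿ be open, let A = (A_{ij}) be a C¹ matrix-valued function on Ω with A(x) symmetric and positive semidefinite for each x, let V : Ω → [0,∞) be continuous, and let u ∈ C²(Ω) satisfy u > 0 on Ω and −div(A∇u) + V u = 1 pointwise on Ω. Then for every smooth compactly supported real-valued f on Ω, ∫_Ω f²/u + ∫_Ω u² ⟨A∇(f/u), ∇(f/u)⟩ ≤ ∫_Ω [ ⟨A∇f, ∇f⟩ + V f² ]. -/

import Mathlib

open MeasureTheory Metric

noncomputable section

/-- Partial derivative `∂g/∂x_j` of a real-valued function on `ℝⁿ`. -/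
def pdR {n : ℕ} (j : Fin n) (g : EuclideanSpace ℝ (Fin n) → ℝ)
    (x : EuclideanSpace ℝ (Fin n)) : ℝ :=
  fderiv ℝ g x (EuclideanSpace.single j 1)

/-- The bilinear expression `⟨A∇g, ∇h⟩(x) = Σ_i (Σ_j A_{ij}(x) ∂_j g(x)) ∂_i h(x)`. -/
def bform {n : ℕ} (A : EuclideanSpace ℝ (Fin n) → Fin n → Fin n → ℝ)
    (g h : EuclideanSpace ℝ (Fin n) → ℝ) (x : EuclideanSpace ℝ (Fin n)) : ℝ :=
  ∑ i, (∑ j, A x i j * pdR j g x) * pdR i h x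

lemma integral_pdR_eq_zero {n : ℕ} {G : EuclideanSpace ℝ (Fin n) → ℝ}
    (hd : Differentiable ℝ G) (hi : Integrable G) (j : Fin n)
    (hi' : Integrable (fun x => pdR j G x)) :
    ∫ x, pdR j G x = 0 := by
  have h := integral_mul_fderiv_eq_neg_fderiv_mul_of_integrable (μ := volume)
    (f := fun _ : EuclideanSpace ℝ (Fin n) => (1:ℝ)) (g := G)
    (v := EuclideanSpace.single j 1) ?_ ?_ ?_ (fun x _ => (differentiable_const 1) x) (fun x _ => hd x)
  · simpa [pdR] using h
  · simp
  · simpa [pdR] using hi'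
  · simpa using hi

lemma pdR_congr {n : ℕ} (j : Fin n) {G H : EuclideanSpace ℝ (Fin n) → ℝ}
    {x : EuclideanSpace ℝ (Fin n)} (h : G =ᶠ[nhds x] H) : pdR j G x = pdR j H x := by
  unfold pdR; rw [h.fderiv_eq]

lemma pdR_zero_of_eventually {n : ℕ} (j : Fin n) {G : EuclideanSpace ℝ (Fin n) → ℝ}
    {x : EuclideanSpace ℝ (Fin n)} (h : G =ᶠ[nhds x] fun _ => 0) : pdR j G x = 0 := by
  rw [pdR_congr j h]; simp [pdR]

lemma pdR_mul {n : ℕ} (j : Fin n) {a b : EuclideanSpace ℝ (Fin n) → ℝ}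
    {x : EuclideanSpace ℝ (Fin n)} (ha : DifferentiableAt ℝ a x)
    (hb : DifferentiableAt ℝ b x) :
    pdR j (fun y => a y * b y) x = a x * pdR j b x + pdR j a x * b x := by
  unfold pdR
  rw [fderiv_fun_mul ha hb]
  simp [mul_comm]

lemma sum_symm_bil {n : ℕ} {a : Fin n → Fin n → ℝ} (ha : ∀ i j, a i j = a j i)
    (p q : Fin n → ℝ) :
    ∑ i, (∑ j, a i j * p j) * q i = ∑ i, (∑ j, a i j * q j) * p i := by
  simp only [Finset.sum_mul]
  rw [Finset.sum_comm]
  refine Finset.sum_congr rfl fun i _ => Finset.sum_congr rfl fun k _ => ?_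
  rw [ha k i]; ring

lemma quad_expand {n : ℕ} (a : Fin n → Fin n → ℝ) (ha : ∀ i j, a i j = a j i)
    (p q : Fin n → ℝ) (U W : ℝ) :
    ∑ i, (∑ j, a i j * (U * p j + q j * W)) * (U * p i + q i * W)
      = U ^ 2 * (∑ i, (∑ j, a i j * p j) * p i)
        + ∑ i, (∑ j, a i j * q j) * (U * (W * p i + p i * W) + q i * (W * W)) := by
  have key := sum_symm_bil ha p q
  have h1 : ∀ i, (∑ j, a i j * (U * p j + q j * W))
      = U * (∑ j, a i j * p j) + W * (∑ j, a i j * q j) := fun i => by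
    rw [Finset.mul_sum, Finset.mul_sum, ← Finset.sum_add_distrib]
    exact Finset.sum_congr rfl fun j _ => by ring
  have h2 : ∑ i, (∑ j, a i j * (U * p j + q j * W)) * (U * p i + q i * W)
      = ∑ i, ((U^2) * ((∑ j, a i j * p j) * p i) + ((U*W) * ((∑ j, a i j * p j) * q i)
          + ((U*W) * ((∑ j, a i j * q j) * p i) + (W*W) * ((∑ j, a i j * q j) * q i)))) := by
    refine Finset.sum_congr rfl fun i _ => ?_
    rw [h1]; ring
  have h3 : ∑ i, (∑ j, a i j * q j) * (U * (W * p i + p i * W) + q i * (W * W))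
      = ∑ i, ((2*(U*W)) * ((∑ j, a i j * q j) * p i) + (W*W) * ((∑ j, a i j * q j) * q i)) :=
    Finset.sum_congr rfl fun i _ => by ring
  rw [h2, h3]
  simp only [Finset.sum_add_distrib, ← Finset.mul_sum]
  linear_combination (U*W) * key

/-- Uncertainty principle for the landscape function in the symmetric case (classical
version): if `A` is symmetric positive semidefinite and `u > 0` solves
`−div(A∇u) + Vu = 1` on `Ω`, then for every smooth compactly supported real `f`,
`∫ f²/u + ∫ u²⟨A∇(f/u),∇(f/u)⟩ ≤ ∫[⟨A∇f,∇f⟩ + Vf²]`. -/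
theorem landscape_uncertainty_principle_symmetric
    (n : ℕ) (Ω : Set (EuclideanSpace ℝ (Fin n))) (hΩ : IsOpen Ω)
    (A : EuclideanSpace ℝ (Fin n) → Fin n → Fin n → ℝ)
    (hA : ∀ i j, ContDiffOn ℝ 1 (fun x => A x i j) Ω)
    (hAsym : ∀ x : EuclideanSpace ℝ (Fin n), ∀ i j, A x i j = A x j i)
    (hApsd : ∀ x : EuclideanSpace ℝ (Fin n), ∀ ξ : Fin n → ℝ,
      0 ≤ ∑ i, (∑ j, A x i j * ξ j) * ξ i)
    (V : EuclideanSpace ℝ (Fin n) → ℝ) (hVc : ContinuousOn V Ω)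
    (hV0 : ∀ x ∈ Ω, 0 ≤ V x)
    (u : EuclideanSpace ℝ (Fin n) → ℝ) (hu : ContDiffOn ℝ 2 u Ω)
    (hupos : ∀ x ∈ Ω, 0 < u x)
    (hueq : ∀ x ∈ Ω,
      -(∑ i, pdR i (fun y => ∑ j, A y i j * pdR j u y) x) + V x * u x = 1)
    (f : EuclideanSpace ℝ (Fin n) → ℝ) (hf : ContDiff ℝ (⊤ : ℕ∞) f)
    (hfc : HasCompactSupport f) (hfs : tsupport f ⊆ Ω) :
    (∫ x in Ω, f x ^ 2 / u x)
      + (∫ x in Ω, u x ^ 2 * bform A (fun y => f y / u y) (fun y => f y / u y) x)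
      ≤ ∫ x in Ω, (bform A f f x + V x * f x ^ 2) := by
  classical
  set w : EuclideanSpace ℝ (Fin n) → ℝ := fun x => f x / u x with hwdef
  set g : EuclideanSpace ℝ (Fin n) → ℝ := fun x => f x ^ 2 / u x with hgdef
  -- basic facts
  have hK : IsCompact (tsupport f) := hfc
  have hUopen : IsOpen (tsupport f)ᶜ := (isClosed_tsupport f).isOpen_compl
  have hmemU : ∀ x ∉ tsupport f, (tsupport f)ᶜ ∈ nhds x :=
    fun x hx => hUopen.mem_nhds hx
  have hf0 : ∀ x ∉ tsupport f, f x = 0 := fun x hx => image_eq_zero_of_notMem_tsupport hx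
  have hw0 : ∀ x ∉ tsupport f, w x = 0 := fun x hx => by simp [hwdef, hf0 x hx]
  have hg0 : ∀ x ∉ tsupport f, g x = 0 := fun x hx => by simp [hgdef, hf0 x hx]
  have hfev : ∀ x ∉ tsupport f, f =ᶠ[nhds x] fun _ => 0 := fun x hx =>
    Filter.eventually_of_mem (hmemU x hx) (fun y hy => hf0 y hy)
  have hwev : ∀ x ∉ tsupport f, w =ᶠ[nhds x] fun _ => 0 := fun x hx =>
    Filter.eventually_of_mem (hmemU x hx) (fun y hy => hw0 y hy)
  have hgev : ∀ x ∉ tsupport f, g =ᶠ[nhds x] fun _ => 0 := fun x hx =>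
    Filter.eventually_of_mem (hmemU x hx) (fun y hy => hg0 y hy)
  have hzf : ∀ x ∉ tsupport f, ∀ j, pdR j f x = 0 :=
    fun x hx j => pdR_zero_of_eventually j (hfev x hx)
  have hzw : ∀ x ∉ tsupport f, ∀ j, pdR j w x = 0 :=
    fun x hx j => pdR_zero_of_eventually j (hwev x hx)
  have hzg : ∀ x ∉ tsupport f, ∀ j, pdR j g x = 0 :=
    fun x hx j => pdR_zero_of_eventually j (hgev x hx)
  have hnotΩ : ∀ x, x ∉ Ω → x ∉ tsupport f := fun x hx hh => hx (hfs hh)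
  -- smoothness on Ω
  have hune : ∀ x ∈ Ω, u x ≠ 0 := fun x hx => (hupos x hx).ne'
  have hu1 : ContDiffOn ℝ 1 u Ω := hu.of_le (by norm_num)
  have hpdu : ∀ j, ContDiffOn ℝ 1 (fun x => pdR j u x) Ω := by
    intro j
    have h1 : ContDiffOn ℝ 1 (fderiv ℝ u) Ω := hu.fderiv_of_isOpen hΩ (by norm_num)
    exact h1.clm_apply contDiffOn_const
  have hau1 : ∀ i, ContDiffOn ℝ 1 (fun y => ∑ j, A y i j * pdR j u y) Ω := fun i =>
    ContDiffOn.sum fun j _ => (hA i j).mul (hpdu j)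
  have hfC : ContDiffOn ℝ 1 f Ω := (hf.of_le (by simp)).contDiffOn
  have hw1 : ContDiffOn ℝ 1 w Ω := hfC.div hu1 hune
  have hg1 : ContDiffOn ℝ 1 g Ω := (hfC.pow 2).div hu1 hune
  have hF1 : ∀ i, ContDiffOn ℝ 1 (fun y => (∑ j, A y i j * pdR j u y) * g y) Ω :=
    fun i => (hau1 i).mul hg1
  have hdiff : ∀ h : EuclideanSpace ℝ (Fin n) → ℝ, ContDiffOn ℝ 1 h Ω →
      ∀ x ∈ Ω, DifferentiableAt ℝ h x := fun h hh x hx =>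
    (hh.contDiffAt (hΩ.mem_nhds hx)).differentiableAt one_ne_zero
  -- continuity of partial derivatives on Ω
  have hpdcont : ∀ h : EuclideanSpace ℝ (Fin n) → ℝ, ContDiffOn ℝ 1 h Ω →
      ∀ j, ContinuousOn (fun x => pdR j h x) Ω := by
    intro h hh j
    have := hh.continuousOn_fderiv_of_isOpen hΩ le_rfl
    exact this.clm_apply continuousOn_const
  -- integrability builder
  have mkInt : ∀ h : EuclideanSpace ℝ (Fin n) → ℝ, ContinuousOn h Ω →
      (∀ y ∉ tsupport f, h y = 0) → Integrable h volume := by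
    intro h hc hz
    have hcont : Continuous h := by
      rw [continuous_iff_continuousAt]; intro x
      by_cases hx : x ∈ Ω
      · exact hc.continuousAt (hΩ.mem_nhds hx)
      · have hxK : x ∉ tsupport f := hnotΩ x hx
        have hev : h =ᶠ[nhds x] (fun _ => 0) :=
          Filter.eventually_of_mem (hmemU x hxK) (fun y hy => hz y hy)
        exact (continuousAt_const (y := (0:ℝ))).congr hev.symm
    exact hcont.integrable_of_hasCompactSupport
      (HasCompactSupport.intro hK (fun x hx => hz x hx))
  -- derivative identities on Ω
  have hfw : ∀ x ∈ Ω, f =ᶠ[nhds x] fun y => u y * w y := by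
    intro x hx
    filter_upwards [hΩ.mem_nhds hx] with y hy
    have hne := hune y hy
    simp only [hwdef]; field_simp
  have hgw : ∀ x ∈ Ω, g =ᶠ[nhds x] fun y => u y * (w y * w y) := by
    intro x hx
    filter_upwards [hΩ.mem_nhds hx] with y hy
    have hne := hune y hy
    simp only [hwdef, hgdef]; field_simp
  have Hf : ∀ x ∈ Ω, ∀ j, pdR j f x = u x * pdR j w x + pdR j u x * w x := by
    intro x hx j
    rw [pdR_congr j (hfw x hx), pdR_mul j (hdiff u hu1 x hx) (hdiff w hw1 x hx)]
  have Hg : ∀ x ∈ Ω, ∀ j, pdR j g x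
      = u x * (w x * pdR j w x + pdR j w x * w x) + pdR j u x * (w x * w x) := by
    intro x hx j
    rw [pdR_congr j (hgw x hx),
      pdR_mul j (hdiff u hu1 x hx) ((hdiff w hw1 x hx).fun_mul (hdiff w hw1 x hx)),
      pdR_mul j (hdiff w hw1 x hx) (hdiff w hw1 x hx)]
  -- main pointwise identity (everywhere)
  have hpt : ∀ x, bform A f f x + V x * f x ^ 2
      = u x ^ 2 * bform A w w x + (V x * f x ^ 2 + bform A u g x) := by
    intro x
    by_cases hx : x ∈ Ω
    · have hq := quad_expand (fun i j => A x i j) (fun i j => hAsym x i j)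
        (fun j => pdR j w x) (fun j => pdR j u x) (u x) (w x)
      have e1 : bform A f f x
          = ∑ i, (∑ j, A x i j * (u x * pdR j w x + pdR j u x * w x))
              * (u x * pdR i w x + pdR i u x * w x) := by
        unfold bform
        refine Finset.sum_congr rfl fun i _ => ?_
        rw [Hf x hx i]
        congr 1
        exact Finset.sum_congr rfl fun j _ => by rw [Hf x hx j]
      have e2 : bform A u g x
          = ∑ i, (∑ j, A x i j * pdR j u x)
              * (u x * (w x * pdR i w x + pdR i w x * w x) + pdR i u x * (w x * w x)) := by
        unfold bform
        exact Finset.sum_congr rfl fun i _ => by rw [Hg x hx i]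
      rw [e1, e2, hq]
      unfold bform
      ring
    · have hxK : x ∉ tsupport f := hnotΩ x hx
      simp [bform, hzf x hxK, hzw x hxK, hzg x hxK, hf0 x hxK]
  -- zero off support for the various integrands
  have z1 : ∀ x ∉ tsupport f, u x ^ 2 * bform A w w x = 0 := by
    intro x hx; simp [bform, hzw x hx]
  have z2 : ∀ x ∉ tsupport f, bform A f f x + V x * f x ^ 2 = 0 := by
    intro x hx; simp [bform, hzf x hx, hf0 x hx]
  have z3 : ∀ x ∉ tsupport f, V x * f x ^ 2 + bform A u g x = 0 := by
    intro x hx; simp [bform, hzg x hx, hf0 x hx]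
  have z4 : ∀ i, ∀ x ∉ tsupport f, (∑ j, A x i j * pdR j u x) * g x = 0 := by
    intro i x hx; simp [hg0 x hx]
  have z5 : ∀ i, ∀ x ∉ tsupport f,
      pdR i (fun y => (∑ j, A y i j * pdR j u y) * g y) x = 0 := by
    intro i x hx
    refine pdR_zero_of_eventually i ?_
    filter_upwards [hmemU x hx] with y hy
    simp [hg0 y hy]
  -- integrability
  have I1 : Integrable g volume := mkInt g hg1.continuousOn hg0
  have I2 : Integrable (fun x => u x ^ 2 * bform A w w x) volume := by
    refine mkInt _ ?_ z1
    refine ContinuousOn.mul (hu1.continuousOn.pow 2) ?_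
    exact continuousOn_finset_sum _ fun i _ => ContinuousOn.mul
      (continuousOn_finset_sum _ fun j _ => ((hA i j).continuousOn.mul (hpdcont w hw1 j)))
      (hpdcont w hw1 i)
  have I3 : Integrable (fun x => bform A f f x + V x * f x ^ 2) volume := by
    refine mkInt _ ?_ z2
    refine ContinuousOn.add ?_ (hVc.mul (hfC.continuousOn.pow 2))
    exact continuousOn_finset_sum _ fun i _ => ContinuousOn.mul
      (continuousOn_finset_sum _ fun j _ => ((hA i j).continuousOn.mul (hpdcont f hfC j)))
      (hpdcont f hfC i)
  have I4 : Integrable (fun x => V x * f x ^ 2 + bform A u g x) volume := by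
    refine mkInt _ ?_ z3
    refine ContinuousOn.add (hVc.mul (hfC.continuousOn.pow 2)) ?_
    exact continuousOn_finset_sum _ fun i _ => ContinuousOn.mul
      (continuousOn_finset_sum _ fun j _ => ((hA i j).continuousOn.mul (hpdcont u hu1 j)))
      (hpdcont g hg1 i)
  have I7 : ∀ i, Integrable (fun x => (∑ j, A x i j * pdR j u x) * g x) volume :=
    fun i => mkInt _ (hF1 i).continuousOn (z4 i)
  have I8 : ∀ i, Integrable
      (fun x => pdR i (fun y => (∑ j, A y i j * pdR j u y) * g y) x) volume :=
    fun i => mkInt _ (hpdcont _ (hF1 i) i) (z5 i)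
  -- differentiability of the vector field everywhere
  have hdF : ∀ i, Differentiable ℝ (fun y => (∑ j, A y i j * pdR j u y) * g y) := by
    intro i x
    by_cases hx : x ∈ Ω
    · exact hdiff _ (hF1 i) x hx
    · have hxK : x ∉ tsupport f := hnotΩ x hx
      have hev : (fun y => (∑ j, A y i j * pdR j u y) * g y) =ᶠ[nhds x] fun _ => (0:ℝ) := by
        filter_upwards [hmemU x hxK] with y hy
        simp [hg0 y hy]
      exact (differentiableAt_const (0:ℝ)).congr_of_eventuallyEq hev
  -- integration by parts
  have hIBP : ∀ i, ∫ x, pdR i (fun y => (∑ j, A y i j * pdR j u y) * g y) x = 0 :=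
    fun i => integral_pdR_eq_zero (hdF i) (I7 i) i (I8 i)
  -- divergence product rule (everywhere)
  have hdivF : ∀ x, (∑ i, pdR i (fun y => (∑ j, A y i j * pdR j u y) * g y) x)
      = (∑ i, pdR i (fun y => ∑ j, A y i j * pdR j u y) x) * g x + bform A u g x := by
    intro x
    by_cases hx : x ∈ Ω
    · have e : ∀ i, pdR i (fun y => (∑ j, A y i j * pdR j u y) * g y) x
          = (∑ j, A x i j * pdR j u x) * pdR i g x
            + pdR i (fun y => ∑ j, A y i j * pdR j u y) x * g x :=
        fun i => pdR_mul i (hdiff _ (hau1 i) x hx) (hdiff g hg1 x hx)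
      rw [Finset.sum_congr rfl fun i _ => e i, Finset.sum_add_distrib]
      unfold bform
      rw [Finset.sum_mul]
      ring
    · have hxK : x ∉ tsupport f := hnotΩ x hx
      simp [z5 _ _ hxK, hg0 x hxK, bform, hzg x hxK]
  -- use the equation for u
  have hDg : ∀ x, (∑ i, pdR i (fun y => ∑ j, A y i j * pdR j u y) x) * g x
      = V x * f x ^ 2 - g x := by
    intro x
    by_cases hx : x ∈ Ω
    · have h1 : (∑ i, pdR i (fun y => ∑ j, A y i j * pdR j u y) x) = V x * u x - 1 := by
        have := hueq x hx; linarith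
      have h2 : u x * g x = f x ^ 2 := by
        have hne := hune x hx
        rw [hgdef]; field_simp
      rw [h1]
      calc (V x * u x - 1) * g x = V x * (u x * g x) - g x := by ring
        _ = V x * f x ^ 2 - g x := by rw [h2]
    · have hxK : x ∉ tsupport f := hnotΩ x hx
      simp [hg0 x hxK, hf0 x hxK]
  -- the key integral identity
  have key : (∫ x, g x) = ∫ x, (V x * f x ^ 2 + bform A u g x) := by
    have hptw : ∀ x, ((V x * f x ^ 2 + bform A u g x) - g x)
        = ∑ i, pdR i (fun y => (∑ j, A y i j * pdR j u y) * g y) x := by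
      intro x
      rw [hdivF x, hDg x]; ring
    have hz : ∫ x, ((V x * f x ^ 2 + bform A u g x) - g x) = 0 := by
      rw [integral_congr_ae (Filter.Eventually.of_forall hptw)]
      rw [integral_finset_sum _ (fun i _ => I8 i)]
      simp [hIBP]
    rw [integral_sub I4 I1] at hz
    linarith
  -- convert set integrals to full integrals
  rw [setIntegral_eq_integral_of_forall_compl_eq_zero (fun x hx => hg0 x (hnotΩ x hx)),
    setIntegral_eq_integral_of_forall_compl_eq_zero (fun x hx => z1 x (hnotΩ x hx)),
    setIntegral_eq_integral_of_forall_compl_eq_zero (fun x hx => z2 x (hnotΩ x hx))]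
  have final : ∫ x, (bform A f f x + V x * f x ^ 2)
      = (∫ x, g x) + ∫ x, u x ^ 2 * bform A w w x := by
    calc ∫ x, (bform A f f x + V x * f x ^ 2)
        = ∫ x, (u x ^ 2 * bform A w w x + (V x * f x ^ 2 + bform A u g x)) :=
          integral_congr_ae (Filter.Eventually.of_forall hpt)
      _ = (∫ x, u x ^ 2 * bform A w w x) + ∫ x, (V x * f x ^ 2 + bform A u g x) :=
          integral_add I2 I4
      _ = (∫ x, g x) + ∫ x, u x ^ 2 * bform A w w x := by rw [← key]; ring
  linarith [final.le]
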